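/- arXiv:1201.1229 — 6 statements merged into one kernel-verified Lean document; each statement's English description precedes it below -/
import Mathlib

section
/- If p and q are nonzero integers and A_0 is an integer root of Q_{pq}, then A_0 ≠ 0, A_0 divides p^2 q^2, and B_0 = p^2 q^2 / A_0 is an integer root of Q_{qp}. -/
/-!
With `n = p²q²`, the polynomial `Q_{qp}` is a rescaled reversal of `Q_{pq}`:
`t¹⁰ Q_{qp}(n/t) = -n⁵ Q_{pq}(t)`. Since `Q_{pq}(0) = -(pq)¹⁰ ≠ 0`, a root `A₀` of `Q_{pq}` is
nonzero and `n/A₀` is a rational root of the monic integer polynomial `Q_{qp}`; by the rational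
root theorem it is an integer `B₀`, so `A₀ ∣ n`.
-/

def Q (p q t : ℤ) : ℤ :=
  t^10 + (2*q^2+p^2)*(3*q^2-2*p^2)*t^8
    + (q^8+10*p^2*q^6+4*p^4*q^4-14*p^6*q^2+p^8)*t^6
    - p^2*q^2*(p^8+10*q^2*p^6+4*q^4*p^4-14*q^6*p^2+q^8)*t^4
    - p^6*q^6*(2*p^2+q^2)*(3*p^2-2*q^2)*t^2
    - q^10*p^10

open Polynomial

noncomputable def Qpoly (p q : ℤ) : ℤ[X] :=
  X^10 + (2*C q^2+C p^2)*(3*C q^2-2*C p^2)*X^8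
    + (C q^8+10*C p^2*C q^6+4*C p^4*C q^4-14*C p^6*C q^2+C p^8)*X^6
    - C p^2*C q^2*(C p^8+10*C q^2*C p^6+4*C q^4*C p^4-14*C q^6*C p^2+C q^8)*X^4
    - C p^6*C q^6*(2*C p^2+C q^2)*(3*C p^2-2*C q^2)*X^2
    - C q^10*C p^10

theorem Qpoly_monic (p q : ℤ) : (Qpoly p q).Monic := by
  unfold Qpoly
  monicity!

theorem aeval_Qpoly_intCast {K : Type*} [CommRing K] (p q t : ℤ) :
    aeval (t : K) (Qpoly p q) = Q p q t := by
  simp only [Qpoly, Q, map_add, map_sub, map_mul, map_pow, map_ofNat, aeval_X, eq_intCast,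
    map_intCast]
  push_cast
  ring

theorem aeval_Qpoly_swap_div {K : Type*} [Field K] (p q : ℤ) {t : K} (ht : t ≠ 0) :
    t^10 * aeval ((p^2 * q^2 : K) / t) (Qpoly q p) = -(p^2 * q^2 : K)^5 * aeval t (Qpoly p q) := by
  simp only [Qpoly, map_add, map_sub, map_mul, map_pow, map_ofNat, aeval_X, eq_intCast,
    map_intCast]
  field_simp
  ring

theorem Q_root_inversion (p q A₀ : ℤ) (hp : p ≠ 0) (hq : q ≠ 0)
    (hroot : Q p q A₀ = 0) :
    A₀ ≠ 0 ∧ A₀ ∣ p^2 * q^2 ∧ Q q p (p^2 * q^2 / A₀) = 0 := by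
  have hA : A₀ ≠ 0 := by
    rintro rfl
    simp [Q, hp, hq] at hroot
  have hrat : aeval ((p^2 * q^2 : ℚ) / A₀) (Qpoly q p) = 0 := by
    have h := aeval_Qpoly_swap_div (K := ℚ) p q (Int.cast_ne_zero.mpr hA)
    rw [aeval_Qpoly_intCast, hroot] at h
    simpa [hA] using h
  obtain ⟨B, hB⟩ := isInteger_of_is_root_of_monic (Qpoly_monic q p) hrat
  rw [algebraMap_int_eq, eq_intCast] at hB
  have hAB : p^2 * q^2 = A₀ * B := by
    rw [eq_div_iff (by exact_mod_cast hA)] at hB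
    exact_mod_cast hB.symm.trans (mul_comm _ _)
  refine ⟨hA, ⟨B, hAB⟩, ?_⟩
  rw [hAB, Int.mul_ediv_cancel_left _ hA]
  rw [← hB, aeval_Qpoly_intCast] at hrat
  exact_mod_cast hrat
end

section
/- Let p, q be nonzero integers. The polynomial Q_{pq}(t) has an integer root if and only if there exist integers C_4, D_4, C_6, D_6 and positive integers A_0, B_0 satisfying: A_0·C_4 = B_0·D_4; A_0·B_0 = p^2 q^2; C_6 - A_0^2 = (2q^2+p^2)(3q^2-2p^2); D_6 - B_0^2 = (2p^2+q^2)(3p^2-2q^2); C_4 - A_0^2·C_6 = p^8 - 14p^6q^2 + 4p^4q^4 + 10p^2q^6 + q^8; and D_4 - B_0^2·D_6 = q^8 - 14q^6p^2 + 4q^4p^4 + 10q^2p^6 + p^8. -/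
open Polynomial

def Qside {R : Type*} [CommRing R] (p q t : R) : R :=
  t^5 + (2*q^2+p^2)*(3*q^2-2*p^2)*t^3 + (p^8 - 14*p^6*q^2 + 4*p^4*q^4 + 10*p^2*q^6 + q^8)*t

@[simp, norm_cast]
theorem cast_Qside {R : Type*} [CommRing R] (p q t : ℤ) :
    ((Qside p q t : ℤ) : R) = Qside (p : R) q t := by
  simp [Qside]

theorem cast_Q_eq_of_mul_eq {R : Type*} [CommRing R] (p q t : ℤ) {s : R}
    (hs : t * s = p^2 * q^2) :
    (Q p q t : R) = t^5 * (Qside (p : R) q t - Qside (q : R) p s) := by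
  set N : R := (p:R)^2 * q^2
  unfold Q Qside
  push_cast
  linear_combination ((p^8+10*q^2*p^6+4*q^4*p^4-14*q^6*p^2+q^8)*(t:R)^4
    + (2*p^2+q^2)*(3*p^2-2*q^2)*t^2*((t*s)^2 + t*s*N + N^2)
    + ((t*s)^4 + (t*s)^3*N + (t*s)^2*N^2 + t*s*N^3 + N^4)) * hs

theorem Q_neg (p q t : ℤ) : Q p q (-t) = Q p q t := by
  unfold Q; ring

theorem Q_zero_ne_zero {p q : ℤ} (hp : p ≠ 0) (hq : q ≠ 0) : Q p q 0 ≠ 0 := by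
  simp [Q, hp, hq]

theorem exists_algebraMap_eq_of_Qside_eq {R K : Type*} [CommRing R] [IsDomain R]
    [IsIntegrallyClosed R] [Field K] [Algebra R K] [IsFractionRing R K] {p q c : R} {s : K}
    (h : Qside (algebraMap R K p) (algebraMap R K q) s = algebraMap R K c) :
    ∃ r, algebraMap R K r = s := by
  refine IsIntegrallyClosed.isIntegral_iff.mp ⟨Qside (C p) (C q) X - C c, ?_, ?_⟩
  · unfold Qside; monicity!
  · simpa [Qside, sub_eq_zero] using h

theorem exists_Q_eq_zero_iff {p q : ℤ} (hp : p ≠ 0) (hq : q ≠ 0) :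
    (∃ t, Q p q t = 0) ↔
      ∃ a b : ℤ, 0 < a ∧ 0 < b ∧ a * b = p^2 * q^2 ∧ Qside p q a = Qside q p b := by
  constructor
  · rintro ⟨t, ht⟩
    have ht0 : t ≠ 0 := by rintro rfl; exact Q_zero_ne_zero hp hq ht
    obtain ⟨a, ha, hQa⟩ : ∃ a, 0 < a ∧ Q p q a = 0 :=
      ⟨|t|, abs_pos.mpr ht0, by rcases abs_choice t with h | h <;> simp [h, Q_neg, ht]⟩
    set s : ℚ := p^2 * q^2 / a
    have hs : (a : ℚ) * s = p^2 * q^2 := mul_div_cancel₀ _ (by exact_mod_cast ha.ne')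
    have hside : Qside (q : ℚ) p s = Qside (p : ℚ) q a := by
      have := cast_Q_eq_of_mul_eq p q a hs
      rw [hQa, Int.cast_zero, eq_comm, mul_eq_zero, sub_eq_zero] at this
      exact (this.resolve_left (by positivity)).symm
    obtain ⟨b, hb⟩ := exists_algebraMap_eq_of_Qside_eq (K := ℚ) (p := q) (q := p)
      (c := Qside p q a) (by simpa [eq_intCast] using hside)
    rw [eq_intCast] at hb
    rw [← hb] at hs hside
    have hab : a * b = p^2 * q^2 := by exact_mod_cast hs
    refine ⟨a, b, ha, pos_of_mul_pos_right (hab ▸ by positivity) ha.le, hab, ?_⟩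
    exact_mod_cast hside.symm
  · rintro ⟨a, b, -, -, hab, hside⟩
    exact ⟨a, by simpa [hside] using cast_Q_eq_of_mul_eq p q a hab⟩

theorem Q_integer_root_iff_system (p q : ℤ) (hp : p ≠ 0) (hq : q ≠ 0) :
    (∃ t : ℤ, Q p q t = 0) ↔
      ∃ (C₄ D₄ C₆ D₆ A₀ B₀ : ℤ), 0 < A₀ ∧ 0 < B₀ ∧
        A₀ * C₄ = B₀ * D₄ ∧
        A₀ * B₀ = p^2 * q^2 ∧
        C₆ - A₀^2 = (2*q^2+p^2)*(3*q^2-2*p^2) ∧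
        D₆ - B₀^2 = (2*p^2+q^2)*(3*p^2-2*q^2) ∧
        C₄ - A₀^2*C₆ = p^8 - 14*p^6*q^2 + 4*p^4*q^4 + 10*p^2*q^6 + q^8 ∧
        D₄ - B₀^2*D₆ = q^8 - 14*q^6*p^2 + 4*q^4*p^4 + 10*q^2*p^6 + p^8 := by
  rw [exists_Q_eq_zero_iff hp hq]
  constructor
  · rintro ⟨a, b, ha, hb, hab, hside⟩
    refine ⟨a^2 * (a^2 + (2*q^2+p^2)*(3*q^2-2*p^2))
        + (p^8 - 14*p^6*q^2 + 4*p^4*q^4 + 10*p^2*q^6 + q^8),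
      b^2 * (b^2 + (2*p^2+q^2)*(3*p^2-2*q^2))
        + (q^8 - 14*q^6*p^2 + 4*q^4*p^4 + 10*q^2*p^6 + p^8),
      a^2 + (2*q^2+p^2)*(3*q^2-2*p^2), b^2 + (2*p^2+q^2)*(3*p^2-2*q^2), a, b,
      ha, hb, ?_, hab, by ring, by ring, by ring, by ring⟩
    unfold Qside at hside
    linear_combination hside
  · rintro ⟨C₄, D₄, C₆, D₆, a, b, ha, hb, hC, hab, hC₆, hD₆, hC₄, hD₄⟩
    refine ⟨a, b, ha, hb, hab, ?_⟩
    unfold Qside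
    linear_combination b * hD₄ + b^3 * hD₆ - a * hC₄ - a^3 * hC₆ + hC
end

section
/- Let p, q be positive coprime integers. Suppose A_0, B_0 are positive integers with A_0·B_0 = p^2 q^2 such that for every prime r dividing gcd(A_0, B_0), the r-adic valuations satisfy v_r(A_0) = v_r(B_0) = v_r(p·q). Then there exist positive pairwise coprime integers a_p, b_p, c_p, a_q, b_q, c_q with p = a_p·b_p·c_p, q = a_q·b_q·c_q, A_0 = a_p^2·c_p·a_q^2·c_q, and B_0 = b_p^2·c_p·b_q^2·c_q. -/
/-!
Put `c = gcd A₀ B₀`. The valuation condition says exactly that no prime divides both `c` and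
`A₀ / c` (or `B₀ / c`), so `A₀ / c`, `B₀ / c`, `c` are pairwise coprime. Since
`c² · (A₀ / c) · (B₀ / c) = (p q)²`, the two coprime cofactors multiply to a square and hence are
squares `a²`, `b²`, giving `p q = a b c`. Finally each of `a, b, c` divides `p q` and splits as its
`gcd` with `p` times its `gcd` with `q`.
-/

namespace Nat

theorem coprime_div_gcd_gcd_of_padicValNat_eq {A B : ℕ} (hA : A ≠ 0)
    (hval : ∀ r : ℕ, r.Prime → r ∣ gcd A B → padicValNat r A = padicValNat r B) :
    Coprime (A / gcd A B) (gcd A B) := by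
  refine coprime_of_dvd fun r hr hrA hrG => ?_
  have := Fact.mk hr
  have hpow : r ^ padicValNat r A ∣ gcd A B :=
    dvd_gcd pow_padicValNat_dvd (hval r hr hrG ▸ pow_padicValNat_dvd)
  refine pow_succ_padicValNat_not_dvd (p := r) hA ?_
  calc r ^ (padicValNat r A + 1) = r ^ padicValNat r A * r := pow_succ _ _
    _ ∣ gcd A B * (A / gcd A B) := mul_dvd_mul hpow hrA
    _ = A := Nat.mul_div_cancel' (gcd_dvd_left A B)

theorem exists_coprime_sq_mul_of_mul_eq_sq {A B n : ℕ} (hA : A ≠ 0) (hB : B ≠ 0)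
    (hAB : A * B = n ^ 2)
    (hval : ∀ r : ℕ, r.Prime → r ∣ gcd A B → padicValNat r A = padicValNat r B) :
    ∃ a b c : ℕ, Coprime a b ∧ Coprime a c ∧ Coprime b c ∧
      n = a * b * c ∧ A = a ^ 2 * c ∧ B = b ^ 2 * c := by
  have hAc := coprime_div_gcd_gcd_of_padicValNat_eq hA hval
  have hBc := coprime_div_gcd_gcd_of_padicValNat_eq hB fun r hr h =>
    (hval r hr (gcd_comm A B ▸ h)).symm
  rw [gcd_comm B A] at hBc
  set c := gcd A B
  have hc0 : 0 < c := gcd_pos_of_pos_left B (pos_of_ne_zero hA)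
  have hAB' : Coprime (A / c) (B / c) := coprime_div_gcd_div_gcd hc0
  have hAeq : A = c * (A / c) := (Nat.mul_div_cancel' (gcd_dvd_left A B)).symm
  have hBeq : B = c * (B / c) := (Nat.mul_div_cancel' (gcd_dvd_right A B)).symm
  have hsq : c ^ 2 * (A / c * (B / c)) = n ^ 2 := by
    rw [← hAB]; conv_rhs => rw [hAeq, hBeq]
    ring
  obtain ⟨m, rfl⟩ : c ∣ n := (Nat.pow_dvd_pow_iff two_ne_zero).1 ⟨_, hsq.symm⟩
  have hm : A / c * (B / c) = m ^ 2 := by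
    rw [mul_pow] at hsq
    exact Nat.eq_of_mul_eq_mul_left (pow_pos hc0 2) hsq
  obtain ⟨a, ha⟩ := exists_eq_pow_of_mul_eq_pow (Nat.isUnit_iff.2 hAB') hm
  obtain ⟨b, hb⟩ :=
    exists_eq_pow_of_mul_eq_pow (Nat.isUnit_iff.2 hAB'.symm) ((mul_comm _ _).trans hm)
  rw [ha, hb] at hAB' hm
  rw [ha] at hAc hAeq
  rw [hb] at hBc hBeq
  have hmab : m = a * b :=
    Nat.pow_left_injective two_ne_zero (show m ^ 2 = (a * b) ^ 2 by rw [← hm, mul_pow])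
  refine ⟨a, b, c, ?_, ?_, ?_, ?_, ?_, ?_⟩
  · exact (coprime_pow_left_iff two_pos _ _).1 ((coprime_pow_right_iff two_pos _ _).1 hAB')
  · exact (coprime_pow_left_iff two_pos _ _).1 hAc
  · exact (coprime_pow_left_iff two_pos _ _).1 hBc
  · rw [hmab]; ring
  · rw [hAeq]; ring
  · rw [hBeq]; ring

theorem gcd_mul_gcd_mul_gcd_of_dvd {a b c m : ℕ} (hab : Coprime a b) (hac : Coprime a c)
    (hbc : Coprime b c) (h : m ∣ a * b * c) :
    gcd a m * gcd b m * gcd c m = m := by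
  rw [gcd_comm a, gcd_comm b, gcd_comm c, ← hab.gcd_mul, ← (hac.mul_left hbc).gcd_mul,
    gcd_eq_left h]

end Nat

theorem six_number_decomposition (p q A₀ B₀ : ℕ)
    (hp : 0 < p) (hq : 0 < q) (hpq : Nat.gcd p q = 1)
    (hA : 0 < A₀) (hB : 0 < B₀)
    (hAB : A₀ * B₀ = p^2 * q^2)
    (hval : ∀ r : ℕ, r.Prime → r ∣ Nat.gcd A₀ B₀ →
      padicValNat r A₀ = padicValNat r B₀ ∧ padicValNat r A₀ = padicValNat r (p * q)) :
    ∃ aₚ bₚ cₚ a_q b_q c_q : ℕ,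
      0 < aₚ ∧ 0 < bₚ ∧ 0 < cₚ ∧ 0 < a_q ∧ 0 < b_q ∧ 0 < c_q ∧
      List.Pairwise Nat.Coprime [aₚ, bₚ, cₚ, a_q, b_q, c_q] ∧
      p = aₚ * bₚ * cₚ ∧ q = a_q * b_q * c_q ∧
      A₀ = aₚ^2 * cₚ * a_q^2 * c_q ∧ B₀ = bₚ^2 * cₚ * b_q^2 * c_q := by
  obtain ⟨a, b, c, hab, hac, hbc, hn, rfl, rfl⟩ :=
    Nat.exists_coprime_sq_mul_of_mul_eq_sq hA.ne' hB.ne' (hAB.trans (mul_pow p q 2).symm)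
      fun r hr h => (hval r hr h).1
  have hpq' : Nat.Coprime p q := hpq
  have split {x : ℕ} (hx : x ∣ a * b * c) : x.gcd p * x.gcd q = x :=
    (Nat.gcd_mul_gcd_eq_iff_dvd_mul_of_coprime hpq').2 (hn ▸ hx)
  have ha := split (dvd_mul_of_dvd_left (dvd_mul_right a b) c)
  have hb := split (dvd_mul_of_dvd_left (dvd_mul_left b a) c)
  have hc := split (dvd_mul_left c (a * b))
  refine ⟨a.gcd p, b.gcd p, c.gcd p, a.gcd q, b.gcd q, c.gcd q,
    Nat.gcd_pos_of_pos_right _ hp, Nat.gcd_pos_of_pos_right _ hp, Nat.gcd_pos_of_pos_right _ hp,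
    Nat.gcd_pos_of_pos_right _ hq, Nat.gcd_pos_of_pos_right _ hq, Nat.gcd_pos_of_pos_right _ hq,
    ?_, (Nat.gcd_mul_gcd_mul_gcd_of_dvd hab hac hbc (hn ▸ dvd_mul_right p q)).symm,
    (Nat.gcd_mul_gcd_mul_gcd_of_dvd hab hac hbc (hn ▸ dvd_mul_left q p)).symm, ?_, ?_⟩
  · simp only [List.pairwise_cons, List.mem_cons, List.mem_nil_iff, or_false, forall_eq_or_imp,
      forall_eq, IsEmpty.forall_iff, implies_true, List.Pairwise.nil, and_true]
    repeat' apply And.intro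
    -- pairs over the same prime factor inherit coprimality from `a, b, c`, the others from `p, q`
    all_goals first
      | exact .of_dvd (Nat.gcd_dvd_left _ _) (Nat.gcd_dvd_left _ _) ‹_›
      | exact .of_dvd (Nat.gcd_dvd_right _ _) (Nat.gcd_dvd_right _ _) hpq'
  · conv_lhs => rw [← ha, ← hc]
    ring
  · conv_lhs => rw [← hb, ← hc]
    ring
end

section
/- Let p, q be positive coprime integers with p ≠ q, and suppose positive integers A_0, B_0 satisfy A_0·B_0 = p^2 q^2 and A_0·(A_0^4 + (2q^2+p^2)(3q^2-2p^2)A_0^2 + p^8-14p^6q^2+4p^4q^4+10p^2q^6+q^8) = B_0·(B_0^4 + (2p^2+q^2)(3p^2-2q^2)B_0^2 + q^8-14q^6p^2+4q^4p^4+10q^2p^6+p^8). Then the polynomial Q_{pq}(t) has an integer root, namely t = A_0. -/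
def quintic (p q x : ℤ) : ℤ :=
  x * (x^4 + (2*q^2+p^2)*(3*q^2-2*p^2)*x^2 + p^8 - 14*p^6*q^2 + 4*p^4*q^4 + 10*p^2*q^6 + q^8)

theorem pow_five_mul_quintic_swap_of_mul_eq {p q t s : ℤ} (h : t * s = p^2 * q^2) :
    t^5 * quintic q p s = (p^2*q^2)^5 + (2*p^2+q^2)*(3*p^2-2*q^2)*(p^2*q^2)^3*t^2
      + (q^8-14*q^6*p^2+4*q^4*p^4+10*q^2*p^6+p^8)*(p^2*q^2)*t^4 := by
  rw [← h, quintic]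
  ring

theorem Q_eq_pow_five_mul_sub_of_mul_eq {p q t s : ℤ} (h : t * s = p^2 * q^2) :
    Q p q t = t^5 * (quintic p q t - quintic q p s) := by
  rw [mul_sub, pow_five_mul_quintic_swap_of_mul_eq h, Q, quintic]
  ring

theorem root_from_system_general (p q A₀ B₀ : ℤ)
    (hAB : A₀ * B₀ = p^2 * q^2)
    (heq : A₀ * (A₀^4 + (2*q^2+p^2)*(3*q^2-2*p^2)*A₀^2
              + p^8 - 14*p^6*q^2 + 4*p^4*q^4 + 10*p^2*q^6 + q^8)
         = B₀ * (B₀^4 + (2*p^2+q^2)*(3*p^2-2*q^2)*B₀^2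
              + q^8 - 14*q^6*p^2 + 4*q^4*p^4 + 10*q^2*p^6 + p^8)) :
    Q p q A₀ = 0 := by
  have hsystem : quintic p q A₀ = quintic q p B₀ := heq
  rw [Q_eq_pow_five_mul_sub_of_mul_eq hAB, hsystem, sub_self, mul_zero]

theorem root_from_system (p q A₀ B₀ : ℤ)
    (hp : 0 < p) (hq : 0 < q) (hpq : IsCoprime p q) (hne : p ≠ q)
    (hA : 0 < A₀) (hB : 0 < B₀)
    (hAB : A₀ * B₀ = p^2 * q^2)
    (heq : A₀ * (A₀^4 + (2*q^2+p^2)*(3*q^2-2*p^2)*A₀^2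
              + p^8 - 14*p^6*q^2 + 4*p^4*q^4 + 10*p^2*q^6 + q^8)
         = B₀ * (B₀^4 + (2*p^2+q^2)*(3*p^2-2*q^2)*B₀^2
              + q^8 - 14*q^6*p^2 + 4*q^4*p^4 + 10*q^2*p^6 + p^8)) :
    Q p q A₀ = 0 :=
  root_from_system_general p q A₀ B₀ hAB heq
end

section
/- For q = 1 and any prime p, the equation Q_{p,1}(t) = 0 has no integer solutions t, where Q_{p,1}(t) = t^{10} + (2+p^2)(3-2p^2)t^8 + (1+10p^2+4p^4-14p^6+p^8)t^6 - p^2(p^8+10p^6+4p^4-14p^2+1)t^4 - p^6(2p^2+1)(3p^2-2)t^2 - p^{10}. -/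
/-!
Writing `m = p^2` and `s = t^2`, the polynomial is a monic quintic in `s` with constant term
`-m^5`, so an integer root forces `t ∣ p^10` and hence `s = m^i`. For `i ≥ 3` every term other
than `-m^5` is divisible by `m^6`, so `m^6 ∣ m^5`, impossible as `m ≥ 2`; the three values at
`s = 1, m, m^2` factor visibly and are nonzero for `m ≥ 2`.
-/

/-- `Q_{p,1}(t)` as a polynomial in `m = p^2` and `s = t^2`. -/
def secondCuboidQuintic (m s : ℤ) : ℤ :=
  s^5 + (2+m)*(3-2*m)*s^4 + (1+10*m+4*m^2-14*m^3+m^4)*s^3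
    - m*(m^4+10*m^3+4*m^2-14*m+1)*s^2 - m^3*(2*m+1)*(3*m-2)*s - m^5

namespace secondCuboidQuintic

theorem dvd_of_eq_zero {m s : ℤ} (h : secondCuboidQuintic m s = 0) : s ∣ m ^ 5 :=
  ⟨s^4 + (2+m)*(3-2*m)*s^3 + (1+10*m+4*m^2-14*m^3+m^4)*s^2
    - m*(m^4+10*m^3+4*m^2-14*m+1)*s - m^3*(2*m+1)*(3*m-2), by
    unfold secondCuboidQuintic at h; linear_combination -h⟩

theorem eval_one (m : ℤ) :
    secondCuboidQuintic m 1 = 8 * (1 + m + 2*m^2 - 2*m^3 - m^4 - m^5) := by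
  unfold secondCuboidQuintic; ring

theorem eval_self (m : ℤ) : secondCuboidQuintic m m = 32 * m^4 * (1 - m^2) := by
  unfold secondCuboidQuintic; ring

theorem eval_sq (m : ℤ) : secondCuboidQuintic m (m^2) = 16 * m^6 * (1 - m^3) := by
  unfold secondCuboidQuintic; ring

theorem pow_six_dvd_eval_mul_cube_add (m u : ℤ) :
    m ^ 6 ∣ secondCuboidQuintic m (m^3 * u) + m ^ 5 :=
  ⟨m^9*u^5 + (2+m)*(3-2*m)*m^6*u^4 + (1+10*m+4*m^2-14*m^3+m^4)*m^3*u^3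
    - m*(m^4+10*m^3+4*m^2-14*m+1)*u^2 - (2*m+1)*(3*m-2)*u, by
    unfold secondCuboidQuintic; ring⟩

theorem eval_pow_ne_zero {m : ℤ} (hm : 2 ≤ m) (i : ℕ) : secondCuboidQuintic m (m ^ i) ≠ 0 := by
  have hm0 : 0 < m := by omega
  match i with
  | 0 =>
    rw [pow_zero, eval_one]
    nlinarith [pow_pos hm0 3, pow_pos hm0 4, pow_pos hm0 5]
  | 1 =>
    rw [pow_one, eval_self]
    exact mul_ne_zero (by positivity) (by nlinarith)
  | 2 =>
    rw [eval_sq]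
    exact mul_ne_zero (by positivity) (by nlinarith [pow_pos hm0 2])
  | k + 3 =>
    intro h
    have h6 := pow_six_dvd_eval_mul_cube_add m (m ^ k)
    rw [← pow_add, add_comm 3 k, h, zero_add,
      pow_dvd_pow_iff hm0.ne' (by rw [Int.isUnit_iff]; omega)] at h6
    omega

end secondCuboidQuintic

theorem Int.sq_eq_pow_sq_of_dvd_prime_pow {p t : ℤ} (hp : Prime p) {n : ℕ} (h : t ∣ p ^ n) :
    ∃ i : ℕ, t ^ 2 = (p ^ 2) ^ i := by
  obtain ⟨i, -, hassoc⟩ := (dvd_prime_pow hp n).mp h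
  exact ⟨i, by rw [← pow_mul, mul_comm, pow_mul, ← Int.natAbs_eq_iff_sq_eq,
    Int.natAbs_eq_natAbs_iff, ← Int.associated_iff]; exact hassoc⟩

theorem Int.two_le_sq_of_prime {p : ℤ} (hp : Prime p) : 2 ≤ p ^ 2 := by
  have h := Int.prime_iff_natAbs_prime.mp hp |>.two_le
  have h' : (2 : ℤ) ≤ p.natAbs := by exact_mod_cast h
  rw [← Int.natAbs_sq]
  nlinarith

theorem no_root_q_one_general (p : ℤ) (hprime : Prime p) (t : ℤ) :
    t^10 + (2+p^2)*(3-2*p^2)*t^8 + (1+10*p^2+4*p^4-14*p^6+p^8)*t^6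
      - p^2*(p^8+10*p^6+4*p^4-14*p^2+1)*t^4
      - p^6*(2*p^2+1)*(3*p^2-2)*t^2 - p^10 ≠ 0 := by
  have hQ : t^10 + (2+p^2)*(3-2*p^2)*t^8 + (1+10*p^2+4*p^4-14*p^6+p^8)*t^6
      - p^2*(p^8+10*p^6+4*p^4-14*p^2+1)*t^4
      - p^6*(2*p^2+1)*(3*p^2-2)*t^2 - p^10 = secondCuboidQuintic (p^2) (t^2) := by
    unfold secondCuboidQuintic; ring
  rw [hQ]
  intro h
  have ht : t ∣ p ^ 10 := by
    rw [show p ^ 10 = (p ^ 2) ^ 5 by ring]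
    exact (dvd_pow_self t two_ne_zero).trans (secondCuboidQuintic.dvd_of_eq_zero h)
  obtain ⟨i, hi⟩ := Int.sq_eq_pow_sq_of_dvd_prime_pow hprime ht
  rw [hi] at h
  exact secondCuboidQuintic.eval_pow_ne_zero (Int.two_le_sq_of_prime hprime) i h

theorem no_root_q_one (p : ℤ) (hp : 0 < p) (hprime : Prime p) (t : ℤ) :
    t^10 + (2+p^2)*(3-2*p^2)*t^8 + (1+10*p^2+4*p^4-14*p^6+p^8)*t^6
      - p^2*(p^8+10*p^6+4*p^4-14*p^2+1)*t^4
      - p^6*(2*p^2+1)*(3*p^2-2)*t^2 - p^10 ≠ 0 :=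
  no_root_q_one_general p hprime t
end

section
/- For p = 1 and any prime q, the equation Q_{1,q}(t) = 0 has no integer solutions t, where Q_{1,q}(t) = t^{10} + (2q^2+1)(3q^2-2)t^8 + (q^8+10q^6+4q^4-14q^2+1)t^6 - q^2(1+10q^2+4q^4-14q^6+q^8)t^4 - q^6(2+q^2)(3-2q^2)t^2 - q^{10}. -/
/-!
Write `u = q ^ 2` and `s = t ^ 2`. By the rational root theorem `s ∣ u ^ 5`, so `s = u ^ k` with
`k ≤ 5`. For each such `k`, `Q(u ^ k) = c * u ^ m * (u * r - 1)` with `c ∈ {16, 32, 8, 1}` and an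
integer polynomial `r` in `u`, and `u * r ≠ 1` because `u` is not a unit.
-/

section CuboidQ

variable {R : Type*} [CommRing R]

/-- `Q_{1,q}(t)` as a polynomial in `s = t ^ 2`, with `u = q ^ 2`. -/
def cuboidQ (u s : R) : R :=
  s ^ 5 + (2 * u + 1) * (3 * u - 2) * s ^ 4 + (u ^ 4 + 10 * u ^ 3 + 4 * u ^ 2 - 14 * u + 1) * s ^ 3
    - u * (1 + 10 * u + 4 * u ^ 2 - 14 * u ^ 3 + u ^ 4) * s ^ 2 - u ^ 3 * (2 + u) * (3 - 2 * u) * s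
    - u ^ 5

theorem dvd_of_cuboidQ_eq_zero {u s : R} (h : cuboidQ u s = 0) : s ∣ u ^ 5 :=
  ⟨s ^ 4 + (2 * u + 1) * (3 * u - 2) * s ^ 3 + (u ^ 4 + 10 * u ^ 3 + 4 * u ^ 2 - 14 * u + 1) * s ^ 2
    - u * (1 + 10 * u + 4 * u ^ 2 - 14 * u ^ 3 + u ^ 4) * s - u ^ 3 * (2 + u) * (3 - 2 * u), by
    unfold cuboidQ at h; linear_combination -h⟩

theorem mul_sub_one_ne_zero {u : R} (hu : ¬IsUnit u) (r : R) : u * r - 1 ≠ 0 :=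
  fun h => hu (.of_mul_eq_one r (sub_eq_zero.mp h))

theorem cuboidQ_pow_ne_zero [IsDomain R] [CharZero R] {u : R} (hu0 : u ≠ 0) (hu : ¬IsUnit u)
    {k : ℕ} (hk : k ≤ 5) : cuboidQ u (u ^ k) ≠ 0 := by
  obtain ⟨c, m, r, hc, hQ⟩ : ∃ (c : R) (m : ℕ) (r : R), c ≠ 0 ∧
      cuboidQ u (u ^ k) = c * u ^ m * (u * r - 1) := by
    interval_cases k
    · exact ⟨16, 1, u ^ 2, by norm_num, by unfold cuboidQ; ring⟩
    · exact ⟨32, 4, u, by norm_num, by unfold cuboidQ; ring⟩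
    · exact ⟨8, 5, u ^ 4 + u ^ 3 + 2 * u ^ 2 - 2 * u - 1, by norm_num, by unfold cuboidQ; ring⟩
    · exact ⟨1, 5, u ^ 9 + 6 * u ^ 8 + 8 * u ^ 6 + 3 * u ^ 5 - 3 * u ^ 3 - 8 * u ^ 2 - 6,
        one_ne_zero, by unfold cuboidQ; ring⟩
    · exact ⟨1, 5, u ^ 14 + 6 * u ^ 12 - u ^ 11 - u ^ 10 + 10 * u ^ 9 + 4 * u ^ 8 - 15 * u ^ 7
        + 15 * u ^ 6 - 4 * u ^ 5 - 10 * u ^ 4 + u ^ 3 + u ^ 2 - 6 * u, one_ne_zero,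
        by unfold cuboidQ; ring⟩
    · exact ⟨1, 5, u ^ 19 + 6 * u ^ 16 - u ^ 15 - 2 * u ^ 14 + u ^ 13 + 10 * u ^ 12 + 4 * u ^ 11
        - 14 * u ^ 10 + 14 * u ^ 8 - 4 * u ^ 7 - 10 * u ^ 6 - u ^ 5 + 2 * u ^ 4 + u ^ 3
        - 6 * u ^ 2, one_ne_zero, by unfold cuboidQ; ring⟩
  rw [hQ]
  exact mul_ne_zero (mul_ne_zero hc (pow_ne_zero m hu0)) (mul_sub_one_ne_zero hu r)

end CuboidQ

theorem Int.exists_sq_eq_pow_of_sq_dvd_prime_sq_pow {q t : ℤ} (hq : Prime q) {n : ℕ}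
    (h : t ^ 2 ∣ (q ^ 2) ^ n) : ∃ k ≤ n, t ^ 2 = (q ^ 2) ^ k := by
  rw [← pow_mul, mul_comm, pow_mul, Int.pow_dvd_pow_iff two_ne_zero] at h
  obtain ⟨k, hk, hassoc⟩ := (dvd_prime_pow hq n).mp h
  refine ⟨k, hk, ?_⟩
  rcases Int.associated_iff.mp hassoc with rfl | rfl <;> ring

theorem no_root_p_one_general (q : ℤ) (hprime : Prime q) (t : ℤ) :
    t^10 + (2*q^2+1)*(3*q^2-2)*t^8 + (q^8+10*q^6+4*q^4-14*q^2+1)*t^6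
      - q^2*(1+10*q^2+4*q^4-14*q^6+q^8)*t^4
      - q^6*(2+q^2)*(3-2*q^2)*t^2 - q^10 ≠ 0 := by
  intro h
  have hQ : cuboidQ (q ^ 2) (t ^ 2) = 0 := by rw [← h]; unfold cuboidQ; ring
  obtain ⟨k, hk, ht⟩ :=
    Int.exists_sq_eq_pow_of_sq_dvd_prime_sq_pow hprime (dvd_of_cuboidQ_eq_zero hQ)
  rw [ht] at hQ
  have hu : ¬IsUnit (q ^ 2) := by
    rw [isUnit_pow_iff two_ne_zero]
    exact hprime.not_isUnit
  exact cuboidQ_pow_ne_zero (pow_ne_zero 2 hprime.ne_zero) hu hk hQ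

theorem no_root_p_one (q : ℤ) (hq : 0 < q) (hprime : Prime q) (t : ℤ) :
    t^10 + (2*q^2+1)*(3*q^2-2)*t^8 + (q^8+10*q^6+4*q^4-14*q^2+1)*t^6
      - q^2*(1+10*q^2+4*q^4-14*q^6+q^8)*t^4
      - q^6*(2+q^2)*(3-2*q^2)*t^2 - q^10 ≠ 0 :=
  no_root_p_one_general q hprime t
end
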